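/- Let ℓ_i(δ) = m_i·δ + c_i, i ∈ [n], be an arrangement of n distinct lines with rational slopes m_i ∈ (1,2) and c_i/m_i ∈ ℕ₀ for every i, and let k ∈ {0,…,n−1} be such that every line ℓ_i intersects the k-level Λ_k at some δ ∈ [0,1], and Λ_k has z vertices lying in (0,1). Let N be a positive integer such that N/m_i is a positive integer for every i, and set p_i = N/m_i and H = (∑_{i=1}^n c_i/m_i) + k + 1. Then the apportionment instance (p,H) has at least ⌈z/2⌉ breaking points, or the apportionment instance (p,H−1) has at least ⌈z/2⌉ breaking points. -/

import Mathlib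

open scoped Classical
open Set

noncomputable section

/-- The stationary rounding rule `⟦r⟧_δ ⊆ ℕ`. -/
def roundSet (δ r : ℝ) : Set ℕ :=
  {x | (r < δ ∧ x = 0) ∨
       (∃ t : ℕ, x = t ∧ (t : ℝ) - 1 + δ < r ∧ r < (t : ℝ) + δ) ∨
       (∃ t : ℕ, (x = t ∨ x = t + 1) ∧ r = (t : ℝ) + δ)}

/-- The output set `f(p,H;δ)` of the stationary `δ`-divisor method. -/
def divisorOutput {n : ℕ} (p : Fin n → ℕ) (H : ℕ) (δ : ℝ) : Set (Fin n → ℕ) :=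
  {x | (∑ i, x i) = H ∧ ∃ lam : ℝ, 0 < lam ∧ ∀ i, x i ∈ roundSet δ (lam * (p i : ℝ))}

/-- The quota `q_i = p_i · H / P` of state `i`. -/
def quota {n : ℕ} (p : Fin n → ℕ) (H : ℕ) (i : Fin n) : ℝ :=
  (p i : ℝ) * (H : ℝ) / (∑ j, (p j : ℝ))

/-- `τ ∈ [0,1]` is a breaking point of the instance `(p,H)`. -/
def IsBreakingPoint {n : ℕ} (p : Fin n → ℕ) (H : ℕ) (τ : ℝ) : Prop :=
  (τ = 0 ∨ τ = 1) ∨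
    (0 < τ ∧ τ < 1 ∧ ∀ ε : ℝ, 0 < ε →
      ∃ δ₁ δ₂ : ℝ,
        δ₁ ∈ (Set.Ioo (τ - ε) (τ + ε) ∩ Set.Ioo (0 : ℝ) 1) \ {τ} ∧
        δ₂ ∈ (Set.Ioo (τ - ε) (τ + ε) ∩ Set.Ioo (0 : ℝ) 1) \ {τ} ∧
        divisorOutput p H δ₁ ≠ divisorOutput p H δ₂)

/-- The `k`-level of the arrangement of the `m` affine functions `δ ↦ a i * δ + b i`:
the `(k+1)`-st smallest of the values at `δ`. -/
def levelFun {m : ℕ} (a b : Fin m → ℝ) (k : ℕ) (δ : ℝ) : ℝ :=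
  sInf {y : ℝ | k + 1 ≤ (Finset.univ.filter (fun i : Fin m => a i * δ + b i ≤ y)).card}

/-- A vertex of the `k`-level: a point where the level does not coincide with a single
affine function on any open neighborhood. -/
def IsVertex {m : ℕ} (a b : Fin m → ℝ) (k : ℕ) (δ : ℝ) : Prop :=
  ¬ ∃ (α β ε : ℝ), 0 < ε ∧ ∀ x ∈ Set.Ioo (δ - ε) (δ + ε), levelFun a b k x = α * x + β


/-!
Write `c i = m i * t i` with `t i ∈ ℕ`. With populations `N / m i` and divisor `μ / N`, state
`i` gets its `(t i + 1)`-st seat exactly when `μ` passes the line value `m i * δ + c i`, and its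
neighbouring thresholds lie `m i > 1` below and above it. As the slopes lie in `(1, 2)` and every
line meets the `k`-level over `[0, 1]`, each line stays within distance `1` of the level on
`(0, 1)`. So away from the finitely many crossings the method outputs a single allocation: `t`
plus one seat for each of the `k + 1` lines weakly below the level when the house size is `H`,
and for each of the `k` lines strictly below it when it is `H - 1`. If a vertex `τ` of the level
were a breaking point of neither instance, both outputs, hence both sets of lines, would be
constant near `τ`, and the level would agree there with the one line in their difference.
So each of the `z` vertices is a breaking point of `(p, H)` or of `(p, H - 1)`.
-/

open Finset Filter Topology Function

section OrderStatistic

variable {ι : Type*} [Fintype ι]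

/-- The `(k+1)`-st smallest value of `w` when `k < card ι`; otherwise `sInf ∅ = 0`. -/
def orderStat (w : ι → ℝ) (k : ℕ) : ℝ :=
  sInf {y : ℝ | k + 1 ≤ #{i | w i ≤ y}}

variable {w : ι → ℝ} {k : ℕ}

theorem exists_isLeast_orderStat (hk : k < Fintype.card ι) :
    ∃ j, IsLeast {y : ℝ | k + 1 ≤ #{i | w i ≤ y}} (w j) := by
  set S := {y : ℝ | k + 1 ≤ #{i | w i ≤ y}}
  -- each `y ∈ S` may be lowered to the largest value `w j ≤ y` without leaving `S`
  have hlower : ∀ y ∈ S, ∃ j, w j ∈ S ∧ w j ≤ y := by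
    intro y hy
    have hy' : k + 1 ≤ #{i | w i ≤ y} := hy
    obtain ⟨j, hj, hmax⟩ := exists_max_image {i | w i ≤ y} w (card_pos.1 (by omega))
    refine ⟨j, hy'.trans (card_le_card fun i hi => mem_filter.2 ⟨mem_univ i, hmax i hi⟩),
      (mem_filter.1 hj).2⟩
  have hne : ({j | w j ∈ S} : Finset ι).Nonempty := by
    have : Nonempty ι := Fintype.card_pos_iff.1 (by omega)
    obtain ⟨j, -, hj⟩ := exists_max_image univ w univ_nonempty
    obtain ⟨j', hj', -⟩ := hlower (w j) (by
      show k + 1 ≤ #{i | w i ≤ w j}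
      rw [filter_true_of_mem fun i _ => hj i (mem_univ i), card_univ]
      omega)
    exact ⟨j', mem_filter.2 ⟨mem_univ _, hj'⟩⟩
  obtain ⟨j₀, hj₀, hmin⟩ := exists_min_image _ w hne
  refine ⟨j₀, (mem_filter.1 hj₀).2, fun y hy => ?_⟩
  obtain ⟨j, hjS, hjy⟩ := hlower y hy
  exact (hmin j (mem_filter.2 ⟨mem_univ _, hjS⟩)).trans hjy

theorem exists_eq_orderStat (hk : k < Fintype.card ι) : ∃ j, w j = orderStat w k := by
  obtain ⟨j, hj⟩ := exists_isLeast_orderStat (w := w) hk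
  exact ⟨j, hj.csInf_eq.symm⟩

theorem isLeast_orderStat (hk : k < Fintype.card ι) :
    IsLeast {y : ℝ | k + 1 ≤ #{i | w i ≤ y}} (orderStat w k) := by
  obtain ⟨j, hj⟩ := exists_isLeast_orderStat (w := w) hk
  rwa [orderStat, hj.csInf_eq]

theorem orderStat_le_iff (hk : k < Fintype.card ι) {y : ℝ} :
    orderStat w k ≤ y ↔ k + 1 ≤ #{i | w i ≤ y} := by
  refine ⟨fun h => (isLeast_orderStat (w := w) hk).1.trans (card_le_card fun i hi => ?_),
    fun h => (isLeast_orderStat hk).2 h⟩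
  exact mem_filter.2 ⟨mem_univ i, (mem_filter.1 hi).2.trans h⟩

theorem card_filter_lt_orderStat_le (hk : k < Fintype.card ι) :
    #{i | w i < orderStat w k} ≤ k := by
  by_contra! h
  obtain ⟨j, hj, hmax⟩ := exists_max_image {i | w i < orderStat w k} w (card_pos.1 (by omega))
  have hle : orderStat w k ≤ w j := (orderStat_le_iff hk).2 <| h.trans_le <| card_le_card
    fun i hi => mem_filter.2 ⟨mem_univ i, hmax i hi⟩
  exact (mem_filter.1 hj).2.not_ge hle

theorem orderStat_le_add {w' : ι → ℝ} {A : ℝ} (hk : k < Fintype.card ι)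
    (h : ∀ i, w' i ≤ w i + A) :
    orderStat w' k ≤ orderStat w k + A :=
  (orderStat_le_iff hk).2 <| (isLeast_orderStat hk).1.trans <| card_le_card
    fun i hi => mem_filter.2 ⟨mem_univ i, (h i).trans (by linarith [(mem_filter.1 hi).2])⟩

theorem orderStat_add_lt {w' : ι → ℝ} {A : ℝ} (hk : k < Fintype.card ι)
    (h : ∀ i, w i + A < w' i) :
    orderStat w k + A < orderStat w' k := by
  by_contra! hle
  have := (isLeast_orderStat (w := w') hk).1.trans <| card_le_card
    (s := {i | w' i ≤ orderStat w' k}) (t := {i | w i < orderStat w k})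
    fun i hi => mem_filter.2 ⟨mem_univ i, by linarith [(mem_filter.1 hi).2, h i]⟩
  have := card_filter_lt_orderStat_le (w := w) hk
  omega

theorem card_filter_orderStat_of_injective (hk : k < Fintype.card ι) (hw : Injective w) :
    #{i | w i ≤ orderStat w k} = k + 1 ∧ #{i | w i < orderStat w k} = k := by
  obtain ⟨j, hj⟩ := exists_eq_orderStat (w := w) hk
  have hsub : ({i | w i ≤ orderStat w k} : Finset ι) ⊆
      insert j ({i | w i < orderStat w k} : Finset ι) := by
    intro i hi
    rcases (mem_filter.1 hi).2.lt_or_eq with hlt | heq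
    · exact mem_insert_of_mem (mem_filter.2 ⟨mem_univ i, hlt⟩)
    · exact hw (heq.trans hj.symm) ▸ mem_insert_self _ _
  have h₁ := Finset.card_le_card hsub
  have h₂ := card_insert_le j ({i | w i < orderStat w k} : Finset ι)
  have h₃ : k + 1 ≤ #{i | w i ≤ orderStat w k} := (isLeast_orderStat hk).1
  have h₄ := card_filter_lt_orderStat_le (w := w) hk
  omega

end OrderStatistic

section Level

variable {n k : ℕ} {a b : Fin n → ℝ}

theorem levelFun_eq_orderStat (δ : ℝ) :
    levelFun a b k δ = orderStat (fun i => a i * δ + b i) k := rfl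

theorem abs_levelFun_sub_le (hk : k < n) {K : ℝ} (hK : ∀ i, |a i| ≤ K) (x y : ℝ) :
    |levelFun a b k x - levelFun a b k y| ≤ K * |x - y| := by
  have step : ∀ x y, levelFun a b k x ≤ levelFun a b k y + K * |x - y| := fun x y =>
    orderStat_le_add (by simpa using hk) fun i => by
      have : a i * (x - y) ≤ K * |x - y| :=
        (le_abs_self _).trans
          (abs_mul (a i) _ ▸ mul_le_mul_of_nonneg_right (hK i) (abs_nonneg _))
      linarith
  rw [abs_sub_le_iff]
  constructor
  · linarith [step x y]
  · linarith [abs_sub_comm x y ▸ step y x]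

theorem continuous_levelFun (hk : k < n) : Continuous (levelFun a b k) := by
  refine (LipschitzWith.of_dist_le_mul (K := ⟨∑ i, |a i|, by positivity⟩)
    fun x y => ?_).continuous
  rw [Real.dist_eq, Real.dist_eq]
  exact abs_levelFun_sub_le hk
    (fun i => single_le_sum (f := fun j => |a j|) (fun j _ => abs_nonneg (a j)) (mem_univ i)) x y

theorem levelFun_sub_mem_Ioo (hk : k < n) {α β : ℝ} (ha : ∀ i, a i ∈ Set.Ioo α β)
    {x y : ℝ} (hxy : x < y) :
    levelFun a b k y - levelFun a b k x ∈ Set.Ioo (α * (y - x)) (β * (y - x)) := by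
  have hk' : k < Fintype.card (Fin n) := by simpa using hk
  have h₁ := orderStat_add_lt (w := fun i => a i * x + b i) (w' := fun i => a i * y + b i)
    (A := α * (y - x)) hk' fun i => by nlinarith [(ha i).1]
  have h₂ := orderStat_add_lt (w := fun i => a i * y + b i) (w' := fun i => a i * x + b i)
    (A := -(β * (y - x))) hk' fun i => by nlinarith [(ha i).2]
  simp only [← levelFun_eq_orderStat] at h₁ h₂
  constructor <;> linarith

theorem abs_sub_levelFun_lt (hk : k < n) {α β : ℝ} (ha : ∀ i, a i ∈ Set.Ioo α β)
    {i : Fin n} {x y : ℝ} (hy : a i * y + b i = levelFun a b k y) (hxy : x ≠ y) :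
    |a i * x + b i - levelFun a b k x| < (β - α) * |x - y| := by
  rcases hxy.lt_or_gt with h | h
  · obtain ⟨h₁, h₂⟩ := levelFun_sub_mem_Ioo hk ha h
    have h₃ : α * (y - x) < a i * (y - x) := by nlinarith [(ha i).1]
    have h₄ : a i * (y - x) < β * (y - x) := by nlinarith [(ha i).2]
    rw [abs_of_neg (sub_neg.2 h), abs_lt]
    constructor <;> nlinarith
  · obtain ⟨h₁, h₂⟩ := levelFun_sub_mem_Ioo hk ha h
    have h₃ : α * (x - y) < a i * (x - y) := by nlinarith [(ha i).1]
    have h₄ : a i * (x - y) < β * (x - y) := by nlinarith [(ha i).2]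
    rw [abs_of_pos (sub_pos.2 h), abs_lt]
    constructor <;> nlinarith

theorem not_isVertex_of_eventually_eq (hk : k < n) {τ α β : ℝ}
    (h : ∀ᶠ δ in 𝓝[≠] τ, levelFun a b k δ = α * δ + β) : ¬IsVertex a b k τ := by
  have hline : Continuous fun δ : ℝ => α * δ + β := by fun_prop
  have hnhds := ((continuous_levelFun hk).continuousAt.eventuallyEq_nhds_iff_eventuallyEq_nhdsNE
    hline.continuousAt).1 h
  obtain ⟨ε, hε, hball⟩ := Metric.eventually_nhds_iff_ball.1 hnhds
  exact fun hv => hv ⟨α, β, ε, hε, fun x hx => hball x (Real.ball_eq_Ioo τ ε ▸ hx)⟩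

theorem eventually_cofinite_injective_lines
    (hdist : ∀ i j, i ≠ j → (a i, b i) ≠ (a j, b j)) :
    ∀ᶠ δ in cofinite, Injective fun i => a i * δ + b i := by
  have hfin : {δ : ℝ | ∃ i j, i ≠ j ∧ a i * δ + b i = a j * δ + b j}.Finite := by
    simp only [Set.ofPred_exists]
    refine Set.finite_iUnion fun i => Set.finite_iUnion fun j => Set.Subsingleton.finite ?_
    rintro x ⟨hij, hx⟩ y ⟨-, hy⟩
    by_cases hab : a i = a j
    · exact absurd (Prod.ext hab (by rw [hab] at hx; linarith)) (hdist i j hij)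
    · exact mul_left_cancel₀ (sub_ne_zero.2 hab)
        (by linarith : (a i - a j) * x = (a i - a j) * y)
  exact hfin.eventually_cofinite_notMem.mono fun δ hδ i j hij =>
    by_contra fun hne => hδ ⟨i, j, hne, hij⟩

end Level

section Divisor

theorem mem_roundSet_iff {δ r : ℝ} (hδ : δ < 1) (hr : 0 ≤ r) {x : ℕ} :
    x ∈ roundSet δ r ↔ (x : ℝ) - 1 + δ ≤ r ∧ r ≤ x + δ := by
  constructor
  · rintro (⟨h, rfl⟩ | ⟨t, rfl, h₁, h₂⟩ | ⟨t, rfl | rfl, h⟩)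
    · constructor <;> push_cast <;> linarith
    · constructor <;> linarith
    · constructor <;> linarith
    · constructor <;> push_cast <;> linarith
  · rintro ⟨h₁, h₂⟩
    rcases h₂.eq_or_lt with h₂ | h₂
    · exact Or.inr (Or.inr ⟨x, Or.inl rfl, h₂⟩)
    rcases h₁.eq_or_lt with h₁ | h₁
    · obtain ⟨t, rfl⟩ : ∃ t, x = t + 1 := by
        refine Nat.exists_eq_add_one.2 (Nat.pos_of_ne_zero ?_)
        rintro rfl
        push_cast at h₁
        linarith
      exact Or.inr (Or.inr ⟨t, Or.inr rfl, by push_cast at h₁; linarith⟩)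
    · exact Or.inr (Or.inl ⟨x, rfl, h₁, h₂⟩)

theorem le_of_mem_roundSet {δ r s : ℝ} (hδ : δ < 1) (hr : 0 ≤ r) (hrs : r < s) {x y : ℕ}
    (hx : x ∈ roundSet δ r) (hy : y ∈ roundSet δ s) : x ≤ y := by
  have h₁ := ((mem_roundSet_iff hδ hr).1 hx).1
  have h₂ := ((mem_roundSet_iff hδ (hr.trans hrs.le)).1 hy).2
  have : (x : ℝ) < y + 1 := by linarith
  exact_mod_cast Nat.lt_succ_iff.1 (by exact_mod_cast this)

theorem mem_roundSet_div {δ m μ : ℝ} (hδ : δ < 1) (hm : 0 < m) (hμ : 0 < μ) {x : ℕ}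
    (h₁ : m * (x - 1 + δ) ≤ μ) (h₂ : μ ≤ m * (x + δ)) : x ∈ roundSet δ (μ / m) := by
  rw [mem_roundSet_iff hδ (div_pos hμ hm).le, le_div_iff₀ hm, div_le_iff₀ hm]
  exact ⟨by linarith, by linarith⟩

variable {n : ℕ} {p : Fin n → ℕ} {H : ℕ} {δ : ℝ}

theorem divisorOutput_eq_singleton (hδ : δ < 1) (hp : ∀ i, 0 < p i) {c : Fin n → ℕ}
    (hc : ∑ i, c i = H) {lam₀ lam₁ : ℝ} (hlam₀ : 0 < lam₀) (hlam : lam₀ < lam₁)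
    (h₀ : ∀ i, c i ∈ roundSet δ (lam₀ * p i))
    (h₁ : ∀ i, c i ∈ roundSet δ (lam₁ * p i)) :
    divisorOutput p H δ = {c} := by
  -- allocations for a smaller divisor are pointwise smaller, and all sums equal `H`
  ext x
  refine ⟨fun ⟨hx, lam, hlam', hxr⟩ => ?_,
    fun hx => (Set.mem_singleton_iff.1 hx) ▸ ⟨hc, lam₀, hlam₀, h₀⟩⟩
  have hpos : ∀ i, (0 : ℝ) < p i := fun i => Nat.cast_pos.2 (hp i)
  have hsum : ∑ i, x i = ∑ i, c i := hx.trans hc.symm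
  rcases lt_or_ge lam lam₁ with hlt | hge
  · have hle : ∀ i ∈ Finset.univ, x i ≤ c i := fun i _ => le_of_mem_roundSet hδ
      (mul_pos hlam' (hpos i)).le (mul_lt_mul_of_pos_right hlt (hpos i)) (hxr i) (h₁ i)
    exact funext fun i => (sum_eq_sum_iff_of_le hle).1 hsum i (Finset.mem_univ i)
  · have hle : ∀ i ∈ Finset.univ, c i ≤ x i := fun i _ => le_of_mem_roundSet hδ
      (mul_pos hlam₀ (hpos i)).le (mul_lt_mul_of_pos_right (hlam.trans_le hge) (hpos i))
      (h₀ i) (hxr i)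
    exact (funext fun i => (sum_eq_sum_iff_of_le hle).1 hsum.symm i (Finset.mem_univ i)).symm

end Divisor

section Bump

variable {ι : Type*}

def bump (t : ι → ℕ) (T : Finset ι) : ι → ℕ := fun i => t i + if i ∈ T then 1 else 0

theorem sum_bump [Fintype ι] (t : ι → ℕ) (T : Finset ι) :
    ∑ i, bump t T i = ∑ i, t i + #T := by
  simp [bump, sum_add_distrib]

theorem bump_injective (t : ι → ℕ) : Injective (bump t) := by
  intro T T' h
  ext i
  have := congrFun h i
  simp only [bump] at this
  split_ifs at this <;> simp_all

end Bump

theorem exists_pos_between_of_forall_lt {ι : Type*} [Finite ι] {lo hi : ι → ℝ}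
    (h : ∀ i j, lo i < hi j) (hhi : ∀ j, 0 < hi j) :
    ∃ a b, 0 < a ∧ a < b ∧ ∀ i, lo i ≤ a ∧ b ≤ hi i := by
  cases isEmpty_or_nonempty ι
  · exact ⟨1, 2, one_pos, one_lt_two, isEmptyElim⟩
  obtain ⟨i₀, hi₀⟩ := Finite.exists_max lo
  obtain ⟨j₀, hj₀⟩ := Finite.exists_min hi
  obtain ⟨a, ha, hab⟩ := exists_between (max_lt (h i₀ j₀) (hhi j₀))
  obtain ⟨b, hab, hb⟩ := exists_between hab
  exact ⟨a, b, (le_max_right _ _).trans_lt ha, hab,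
    fun i => ⟨(hi₀ i).trans ((le_max_left _ _).trans ha.le), hb.le.trans (hj₀ i)⟩⟩

theorem divisorOutput_eq_singleton_bump {n N : ℕ} {p t : Fin n → ℕ} {m w : Fin n → ℝ}
    {δ L : ℝ} {T : Finset (Fin n)} (hN : 0 < N) (hp : ∀ i, (p i : ℝ) = N / m i)
    (hδ : δ ∈ Set.Ioo 0 1)
    (hm : ∀ i, 1 < m i) (hw : ∀ i, m i * (t i + δ) = w i) (hL : ∀ i, |w i - L| < 1)
    (hT : ∀ i ∈ T, w i ≤ L) (hTc : ∀ i ∉ T, L ≤ w i)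
    (hsep : ∀ i ∈ T, ∀ j ∉ T, w i < w j) :
    divisorOutput p (∑ i, t i + #T) δ = {bump t T} := by
  have hm₀ : ∀ i, 0 < m i := fun i => one_pos.trans (hm i)
  have hN₀ : (0 : ℝ) < N := Nat.cast_pos.2 hN
  -- `bump t T` is valid for the divisor `μ / N` exactly when `lo i ≤ μ ≤ hi i` for all `i`
  set lo : Fin n → ℝ := fun i => m i * ((bump t T i : ℝ) - 1 + δ)
  set hi : Fin n → ℝ := fun i => m i * ((bump t T i : ℝ) + δ)
  have hlo : ∀ i, lo i = w i - if i ∈ T then 0 else m i := by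
    intro i; simp only [lo, bump, ← hw]; split_ifs <;> push_cast <;> ring
  have hhi : ∀ i, hi i = w i + if i ∈ T then m i else 0 := by
    intro i; simp only [hi, bump, ← hw]; split_ifs <;> push_cast <;> ring
  have hvalid : ∀ μ, 0 < μ → (∀ i, lo i ≤ μ ∧ μ ≤ hi i) →
      ∀ i, bump t T i ∈ roundSet δ (μ / N * p i) := by
    intro μ hμ hμi i
    have hr : μ / N * p i = μ / m i := by rw [hp i]; field_simp
    exact hr ▸ mem_roundSet_div hδ.2 (hm₀ i) hμ (hμi i).1 (hμi i).2
  obtain ⟨μ₀, μ₁, hμ₀, hμ, hμi⟩ := exists_pos_between_of_forall_lt (lo := lo) (hi := hi)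
    (fun i j => by
      have hLi := abs_lt.1 (hL i)
      have hLj := abs_lt.1 (hL j)
      rw [hlo, hhi]
      split_ifs with hiT hjT hjT
      · linarith [hT i hiT, hm j]
      · linarith [hsep i hiT j hjT]
      · linarith [hm i, hm j]
      · linarith [hm i, hTc j hjT])
    (fun j => mul_pos (hm₀ j) (by have := hδ.1; positivity))
  have hp₀ : ∀ i, 0 < p i := fun i =>
    Nat.cast_pos.1 (by rw [hp i]; exact div_pos hN₀ (hm₀ i))
  exact divisorOutput_eq_singleton hδ.2 hp₀ (sum_bump t T) (div_pos hμ₀ hN₀)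
    (div_lt_div_of_pos_right hμ hN₀)
    (hvalid μ₀ hμ₀ fun i => ⟨(hμi i).1, hμ.le.trans (hμi i).2⟩)
    (hvalid μ₁ (hμ₀.trans hμ) fun i => ⟨(hμi i).1.trans hμ.le, (hμi i).2⟩)

theorem exists_eventually_divisorOutput_eq {n H : ℕ} {p : Fin n → ℕ} {τ : ℝ}
    (hτ : τ ∈ Set.Ioo 0 1) (h : ¬IsBreakingPoint p H τ) :
    ∃ S, ∀ᶠ δ in 𝓝[≠] τ, divisorOutput p H δ = S := by
  have hflat : ¬∀ ε : ℝ, 0 < ε → ∃ δ₁ δ₂ : ℝ,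
      δ₁ ∈ (Set.Ioo (τ - ε) (τ + ε) ∩ Set.Ioo (0 : ℝ) 1) \ {τ} ∧
      δ₂ ∈ (Set.Ioo (τ - ε) (τ + ε) ∩ Set.Ioo (0 : ℝ) 1) \ {τ} ∧
      divisorOutput p H δ₁ ≠ divisorOutput p H δ₂ :=
    fun h' => h (Or.inr ⟨hτ.1, hτ.2, h'⟩)
  push Not at hflat
  obtain ⟨ε, hε, hflat⟩ := hflat
  have hU : (Set.Ioo (τ - ε) (τ + ε) ∩ Set.Ioo (0 : ℝ) 1) \ {τ} ∈ 𝓝[≠] τ :=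
    sdiff_mem_nhdsWithin_compl (inter_mem (Ioo_mem_nhds (by linarith) (by linarith))
      (Ioo_mem_nhds hτ.1 hτ.2)) _
  obtain ⟨δ₀, hδ₀⟩ := Filter.nonempty_of_mem hU
  exact ⟨_, mem_of_superset hU fun δ hδ => hflat δ δ₀ hδ hδ₀⟩

section Arrangement

variable {n k N : ℕ} {m c : Fin n → ℝ} {t p : Fin n → ℕ}

theorem divisorOutput_eq_bump_lines_below (hk : k < n) (hm : ∀ i, 1 < m i)
    (hct : ∀ i, c i = m i * t i) (hN : 0 < N) (hp : ∀ i, (p i : ℝ) = N / m i) {δ : ℝ}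
    (hδ : δ ∈ Set.Ioo 0 1) (hclose : ∀ i, |m i * δ + c i - levelFun m c k δ| < 1)
    (hinj : Injective fun i => m i * δ + c i) :
    divisorOutput p (∑ i, t i + (k + 1)) δ =
        {bump t {i | m i * δ + c i ≤ levelFun m c k δ}} ∧
      divisorOutput p (∑ i, t i + k) δ = {bump t {i | m i * δ + c i < levelFun m c k δ}} := by
  obtain ⟨hle, hlt⟩ : #{i | m i * δ + c i ≤ levelFun m c k δ} = k + 1 ∧
      #{i | m i * δ + c i < levelFun m c k δ} = k :=
    card_filter_orderStat_of_injective (by simpa using hk) hinj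
  have hw : ∀ i, m i * (t i + δ) = m i * δ + c i := fun i => by rw [hct]; ring
  have h₁ := divisorOutput_eq_singleton_bump (T := {i | m i * δ + c i ≤ levelFun m c k δ})
    hN hp hδ hm hw hclose (fun i hi => by simpa using hi)
    (fun i hi => by simp at hi; linarith) (fun i hi j hj => by simp at hi hj; linarith)
  have h₀ := divisorOutput_eq_singleton_bump (T := {i | m i * δ + c i < levelFun m c k δ})
    hN hp hδ hm hw hclose (fun i hi => by simp at hi; linarith)
    (fun i hi => by simpa using hi) (fun i hi j hj => by simp at hi hj; linarith)
  rw [hle] at h₁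
  rw [hlt] at h₀
  exact ⟨h₁, h₀⟩

theorem isBreakingPoint_or_of_isVertex (hk : k < n)
    (hdist : ∀ i j, i ≠ j → (m i, c i) ≠ (m j, c j))
    (hm : ∀ i, m i ∈ Set.Ioo (1 : ℝ) 2) (hct : ∀ i, c i = m i * t i)
    (hclose : ∀ δ ∈ Set.Ioo (0 : ℝ) 1, ∀ i, |m i * δ + c i - levelFun m c k δ| < 1)
    (hN : 0 < N) (hp : ∀ i, (p i : ℝ) = N / m i) {τ : ℝ} (hτ : τ ∈ Set.Ioo 0 1)
    (hv : IsVertex m c k τ) :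
    IsBreakingPoint p (∑ i, t i + (k + 1)) τ ∨ IsBreakingPoint p (∑ i, t i + k) τ := by
  by_contra! h
  obtain ⟨S₁, hS₁⟩ := exists_eventually_divisorOutput_eq hτ h.1
  obtain ⟨S₀, hS₀⟩ := exists_eventually_divisorOutput_eq hτ h.2
  have hev : ∀ᶠ δ in 𝓝[≠] τ,
      {bump t {i | m i * δ + c i ≤ levelFun m c k δ}} = S₁ ∧
      {bump t {i | m i * δ + c i < levelFun m c k δ}} = S₀ := by
    filter_upwards [mem_nhdsWithin_of_mem_nhds (Ioo_mem_nhds hτ.1 hτ.2),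
      (eventually_cofinite_injective_lines hdist).filter_mono (nhdsNE_le_cofinite τ), hS₁, hS₀]
      with δ hδ hinj h₁ h₀
    obtain ⟨e₁, e₀⟩ :=
      divisorOutput_eq_bump_lines_below hk (fun i => (hm i).1) hct hN hp hδ (hclose δ hδ) hinj
    exact ⟨e₁ ▸ h₁, e₀ ▸ h₀⟩
  obtain ⟨δ₀, h₁δ₀, h₀δ₀⟩ := hev.exists
  obtain ⟨i₀, hi₀⟩ : ∃ i, m i * δ₀ + c i = levelFun m c k δ₀ :=
    exists_eq_orderStat (by simpa using hk)
  -- near `τ` the sets of lines (strictly) below the level are constant; `i₀` is their difference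
  refine not_isVertex_of_eventually_eq hk (α := m i₀) (β := c i₀) ?_ hv
  filter_upwards [hev] with δ ⟨h₁, h₀⟩
  have hle : i₀ ∈ ({i | m i * δ + c i ≤ levelFun m c k δ} : Finset (Fin n)) := by
    rw [bump_injective t (Set.singleton_injective (h₁.trans h₁δ₀.symm))]; simp [hi₀]
  have hlt : i₀ ∉ ({i | m i * δ + c i < levelFun m c k δ} : Finset (Fin n)) := by
    rw [bump_injective t (Set.singleton_injective (h₀.trans h₀δ₀.symm))]; simp [hi₀]
  simp only [mem_filter, Finset.mem_univ, true_and, not_lt] at hle hlt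
  exact le_antisymm hlt hle

end Arrangement
theorem exists_half_card_of_forall_or {α : Type*} (s : Finset α) {P Q : α → Prop}
    (h : ∀ x ∈ s, P x ∨ Q x) :
    (∃ S : Finset α, (∀ x ∈ S, P x) ∧ (#s + 1) / 2 ≤ #S) ∨
      (∃ S : Finset α, (∀ x ∈ S, Q x) ∧ (#s + 1) / 2 ≤ #S) := by
  have hcard : #s ≤ #(s.filter P) + #(s.filter Q) :=
    (Finset.card_le_card fun x hx => by rcases h x hx with h | h <;> simp [hx, h]).trans
      (card_union_le _ _)
  by_cases hP : (#s + 1) / 2 ≤ #(s.filter P)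
  · exact Or.inl ⟨s.filter P, fun x hx => (mem_filter.1 hx).2, hP⟩
  · exact Or.inr ⟨s.filter Q, fun x hx => (mem_filter.1 hx).2, by omega⟩

theorem stmt_7_general {n : ℕ} (m c : Fin n → ℝ)
    (hdist : ∀ i j : Fin n, i ≠ j → (m i, c i) ≠ (m j, c j))
    (hm : ∀ i, m i ∈ Set.Ioo (1 : ℝ) 2)
    (hcm : ∀ i, ∃ t : ℕ, c i / m i = (t : ℝ))
    (k : ℕ) (hk : k < n)
    (hint : ∀ i, ∃ δ ∈ Set.Icc (0 : ℝ) 1, m i * δ + c i = levelFun m c k δ)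
    (z : ℕ)
    (hzfin : {δ : ℝ | δ ∈ Set.Ioo (0 : ℝ) 1 ∧ IsVertex m c k δ}.Finite)
    (hz : {δ : ℝ | δ ∈ Set.Ioo (0 : ℝ) 1 ∧ IsVertex m c k δ}.ncard = z)
    (N : ℕ) (hN : 0 < N) (p : Fin n → ℕ) (hpdef : ∀ i, (p i : ℝ) = (N : ℝ) / m i)
    (H : ℕ) (hHdef : (H : ℝ) = (∑ i, c i / m i) + (k : ℝ) + 1) :
    (∃ S : Finset ℝ, (∀ τ ∈ S, IsBreakingPoint p H τ) ∧ (z + 1) / 2 ≤ S.card) ∨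
    (∃ S : Finset ℝ, (∀ τ ∈ S, IsBreakingPoint p (H - 1) τ) ∧ (z + 1) / 2 ≤ S.card) := by
  choose t ht using hcm
  have hct : ∀ i, c i = m i * t i := fun i => by
    rw [← ht i, mul_div_cancel₀ _ (one_pos.trans (hm i).1).ne']
  have hH : H = ∑ i, t i + (k + 1) := by
    have : (H : ℝ) = ∑ i, (t i : ℝ) + k + 1 := by simpa only [ht] using hHdef
    exact_mod_cast this
  have hclose : ∀ δ ∈ Set.Ioo (0 : ℝ) 1, ∀ i,
      |m i * δ + c i - levelFun m c k δ| < 1 := by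
    intro δ hδ i
    obtain ⟨δ', hδ', hmeet⟩ := hint i
    rcases eq_or_ne δ δ' with rfl | hne
    · simp [hmeet]
    · calc _ < (2 - 1) * |δ - δ'| := abs_sub_levelFun_lt hk hm hmeet hne
        _ = |δ - δ'| := by norm_num
        _ ≤ 1 := abs_sub_le_iff.2 ⟨by linarith [hδ.2, hδ'.1], by linarith [hδ.1, hδ'.2]⟩
  have hV := exists_half_card_of_forall_or hzfin.toFinset
      (P := IsBreakingPoint p H) (Q := IsBreakingPoint p (H - 1)) fun τ hτ => by
    rw [Set.Finite.mem_toFinset] at hτ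
    rw [hH, show ∑ i, t i + (k + 1) - 1 = ∑ i, t i + k by omega]
    exact isBreakingPoint_or_of_isVertex hk hdist hm hct hclose hN hpdef hτ.1 hτ.2
  rwa [← Set.ncard_eq_toFinset_card _ hzfin, hz] at hV

/-- lower-bound construction. From a line arrangement with slopes in `(1,2)`,
`c_i/m_i ∈ ℕ`, whose `k`-level has `z` vertices in `(0,1)`, the derived apportionment
instance `(p,H)` or `(p,H−1)` has at least `⌈z/2⌉` breaking points. -/
theorem stmt_7 {n : ℕ} (hn : 1 ≤ n) (m c : Fin n → ℝ)
    (hdist : ∀ i j : Fin n, i ≠ j → (m i, c i) ≠ (m j, c j))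
    (hrat : ∀ i, ∃ q : ℚ, m i = (q : ℝ))
    (hm : ∀ i, m i ∈ Set.Ioo (1 : ℝ) 2)
    (hcm : ∀ i, ∃ t : ℕ, c i / m i = (t : ℝ))
    (k : ℕ) (hk : k < n)
    (hint : ∀ i, ∃ δ ∈ Set.Icc (0 : ℝ) 1, m i * δ + c i = levelFun m c k δ)
    (z : ℕ)
    (hzfin : {δ : ℝ | δ ∈ Set.Ioo (0 : ℝ) 1 ∧ IsVertex m c k δ}.Finite)
    (hz : {δ : ℝ | δ ∈ Set.Ioo (0 : ℝ) 1 ∧ IsVertex m c k δ}.ncard = z)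
    (N : ℕ) (hN : 0 < N) (p : Fin n → ℕ) (hpdef : ∀ i, (p i : ℝ) = (N : ℝ) / m i)
    (H : ℕ) (hHdef : (H : ℝ) = (∑ i, c i / m i) + (k : ℝ) + 1) :
    (∃ S : Finset ℝ, (∀ τ ∈ S, IsBreakingPoint p H τ) ∧ (z + 1) / 2 ≤ S.card) ∨
    (∃ S : Finset ℝ, (∀ τ ∈ S, IsBreakingPoint p (H - 1) τ) ∧ (z + 1) / 2 ≤ S.card) :=
  stmt_7_general m c hdist hm hcm k hk hint z hzfin hz N hN p hpdef H hHdef
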